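/- Let σ > 0, 0 < ρ < 1, m > 0, K > 0, and r₁, r₂ ≥ 0. Then the family of nonnegative terms (k,i,n) ↦ α(k,i,n) r₁^{2n+1} r₂^{2(i−n)+1}, indexed over triples of naturals with 0 ≤ n ≤ i ≤ k, is summable; consequently the closed-form power series for the bivariate Rician shadowed joint PDF converges absolutely at every (r₁,r₂). -/

import Mathlib

open MeasureTheory

/-- Pochhammer symbol (ascending factorial) `(m)_k = m (m+1) ⋯ (m+k-1)`. -/
noncomputable def poch (m : ℝ) (k : ℕ) : ℝ := ∏ j ∈ Finset.range k, (m + j)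

/-- Modified Bessel function of the first kind of order zero,
`I₀(y) = ∑ (y/2)^{2n} / (n!)²`. -/
noncomputable def I0 (y : ℝ) : ℝ := ∑' n : ℕ, (y / 2) ^ (2 * n) / (Nat.factorial n : ℝ) ^ 2

/-- Confluent hypergeometric function `₁F₁(m, 1; z) = ∑ (m)_n zⁿ / (n!)²`. -/
noncomputable def F11 (m z : ℝ) : ℝ := ∑' n : ℕ, poch m n * z ^ n / (Nat.factorial n : ℝ) ^ 2

/-- Series coefficient `α(k,i,n)` of the bivariate Rician shadowed joint PDF. -/
noncomputable def alpha (σ ρ m K : ℝ) (k i n : ℕ) : ℝ :=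
  (8 * Real.rpow (m * ρ / (m * ρ + K)) m / (σ ^ 6 * ρ * (1 - ρ) ^ 2)) *
  (poch m (k - i) * (K / (σ ^ 2 * ρ * (ρ * m + K))) ^ (k - i) /
    (Nat.factorial (k - i) : ℝ) ^ 2) *
  (1 / ((Nat.factorial n : ℝ) ^ 2 * (Nat.factorial (i - n) : ℝ) ^ 2 *
    (σ ^ 2 * (1 - ρ)) ^ (2 * i))) *
  ((Nat.factorial k : ℝ) / (2 * ((1 + ρ) / (σ ^ 2 * ρ * (1 - ρ))) ^ (k + 1)))

/-- Closed-form power series of the bivariate Rician shadowed joint PDF. -/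
noncomputable def fpdf (σ ρ m K r₁ r₂ : ℝ) : ℝ :=
  ∑' k : ℕ, ∑ i ∈ Finset.range (k + 1), ∑ n ∈ Finset.range (i + 1),
    alpha σ ρ m K k i n * r₁ ^ (2 * n + 1) * r₂ ^ (2 * (i - n) + 1) *
      Real.exp (-(r₁ ^ 2 + r₂ ^ 2) / (σ ^ 2 * (1 - ρ)))

/-- `G(j,l,q,γ) = (−1)^j γ^{2(l+j+1)} q! (σ²(1−ρ))^{q+1−j} / (j!·4(l+j+1))`. -/
noncomputable def Gfun (σ ρ : ℝ) (j l q : ℕ) (γ : ℝ) : ℝ :=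
  (-1 : ℝ) ^ j * γ ^ (2 * (l + j + 1)) * (Nat.factorial q : ℝ) *
    (σ ^ 2 * (1 - ρ)) ^ ((q : ℤ) + 1 - (j : ℤ)) /
    ((Nat.factorial j : ℝ) * (4 * (l + j + 1)))

/-- `Ḡ(λ,k)`, the `(2(k+1))`-th moment of the BPP distance distribution. -/
noncomputable def Gbar (Dalt ra lam : ℝ) (k : ℕ) : ℝ :=
  ((Dalt ^ 2 + lam ^ 2 + ra ^ 2) ^ (k + 2) - (Dalt ^ 2 + lam ^ 2) ^ (k + 2)) /
    (ra ^ 2 * (k + 2))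


/-! Reindex the triples by `n`, `l = i - n`, `j = k - i`. The summand becomes a constant times
`y^n z^l (m)_j x^j (n+l+j)! / (n! l! j!)²` with `x = K(1-ρ)/((ρm+K)(1+ρ)) < 1`. The multinomial
bound `(n+l+j)! v^n v^l θ^j ≤ n! l! j!` for `2v + θ = 1` dominates this by a product of two
exponential series and `∑ (m)_j (x/θ)^j / j!`, which converges by the ratio test once `x < θ < 1`. -/

open Nat Filter

theorem factorial_add_mul_pow_mul_pow_le {u v : ℝ} (hu : 0 ≤ u) (hv : 0 ≤ v) (a b : ℕ) :
    ((a + b)! : ℝ) * (u ^ a * v ^ b) ≤ a ! * b ! * (u + v) ^ (a + b) := by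
  have hchoose : ((a + b).choose a : ℝ) * (u ^ a * v ^ b) ≤ (u + v) ^ (a + b) := by
    rw [add_pow]
    calc ((a + b).choose a : ℝ) * (u ^ a * v ^ b)
        = u ^ a * v ^ (a + b - a) * ((a + b).choose a : ℝ) := by
          rw [Nat.add_sub_cancel_left]; ring
      _ ≤ _ := Finset.single_le_sum (f := fun k => u ^ k * v ^ (a + b - k) *
          ((a + b).choose k : ℝ)) (fun k _ => by positivity)
          (Finset.mem_range.2 (by omega))
  calc ((a + b)! : ℝ) * (u ^ a * v ^ b)
      = a ! * b ! * (((a + b).choose a : ℝ) * (u ^ a * v ^ b)) := by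
        rw [← Nat.add_choose_mul_factorial_mul_factorial, Nat.choose_symm_add]; push_cast; ring
    _ ≤ a ! * b ! * (u + v) ^ (a + b) := by gcongr

theorem factorial_add_add_mul_pow_le {u v w : ℝ} (hu : 0 ≤ u) (hv : 0 ≤ v) (hw : 0 ≤ w)
    (a b c : ℕ) :
    ((a + b + c)! : ℝ) * (u ^ a * v ^ b * w ^ c) ≤ a ! * b ! * c ! * (u + v + w) ^ (a + b + c) := by
  have hab := factorial_add_mul_pow_mul_pow_le hu hv a b
  have habc := factorial_add_mul_pow_mul_pow_le (add_nonneg hu hv) hw (a + b) c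
  refine le_of_mul_le_mul_right ?_ (by positivity : (0 : ℝ) < (a + b)!)
  calc ((a + b + c)! : ℝ) * (u ^ a * v ^ b * w ^ c) * (a + b)!
      = (a + b + c)! * w ^ c * ((a + b)! * (u ^ a * v ^ b)) := by ring
    _ ≤ (a + b + c)! * w ^ c * (a ! * b ! * (u + v) ^ (a + b)) := by gcongr
    _ = a ! * b ! * ((a + b + c)! * ((u + v) ^ (a + b) * w ^ c)) := by ring
    _ ≤ a ! * b ! * ((a + b)! * c ! * (u + v + w) ^ (a + b + c)) := by gcongr
    _ = a ! * b ! * c ! * (u + v + w) ^ (a + b + c) * (a + b)! := by ring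

theorem poch_pos {m : ℝ} (hm : 0 < m) (j : ℕ) : 0 < poch m j :=
  Finset.prod_pos fun i _ => by positivity

theorem poch_succ (m : ℝ) (j : ℕ) : poch m (j + 1) = poch m j * (m + j) :=
  Finset.prod_range_succ _ _

theorem summable_poch_mul_pow_div_factorial {m x : ℝ} (hm : 0 < m) (hx0 : 0 < x) (hx1 : x < 1) :
    Summable fun j : ℕ => poch m j * x ^ j / j ! := by
  have hpos (j : ℕ) : 0 < poch m j * x ^ j / j ! := by
    have := poch_pos hm j
    positivity
  refine summable_of_ratio_test_tendsto_lt_one hx1 (Eventually.of_forall fun j => (hpos j).ne') ?_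
  have hratio (j : ℕ) : ‖poch m (j + 1) * x ^ (j + 1) / (j + 1)!‖ / ‖poch m j * x ^ j / (j ! : ℝ)‖
      = (m + 1 * j) / (1 + 1 * j) * x := by
    have := poch_pos hm j
    rw [Real.norm_of_nonneg (hpos j).le, Real.norm_of_nonneg (hpos (j + 1)).le, poch_succ,
      Nat.factorial_succ]
    push_cast
    field_simp
    ring
  simp only [hratio]
  simpa using (tendsto_add_mul_div_add_mul_atTop_nhds m 1 1 one_ne_zero).mul_const x

theorem summable_pow_mul_pow_mul_poch_mul_factorial_div {m x y z : ℝ} (hm : 0 < m) (hx0 : 0 < x)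
    (hx1 : x < 1) (hy : 0 ≤ y) (hz : 0 ≤ z) :
    Summable fun q : ℕ × ℕ × ℕ => y ^ q.1 * z ^ q.2.1 * (poch m q.2.2 * x ^ q.2.2) *
      ((q.1 + q.2.1 + q.2.2)! / ((q.1)! ^ 2 * (q.2.1)! ^ 2 * (q.2.2)! ^ 2)) := by
  obtain ⟨θ, v, hθ, hv, hxθ, hsum⟩ : ∃ θ v : ℝ, 0 < θ ∧ 0 < v ∧ x / θ < 1 ∧ v + v + θ = 1 :=
    ⟨(1 + x) / 2, (1 - x) / 4, by positivity, by linarith, (div_lt_one (by positivity)).2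
      (by linarith), by ring⟩
  have hbound : Summable fun q : ℕ × ℕ × ℕ => (y / v) ^ q.1 / (q.1)! *
      ((z / v) ^ q.2.1 / (q.2.1)! * (poch m q.2.2 * (x / θ) ^ q.2.2 / (q.2.2)!)) :=
    (Real.summable_pow_div_factorial _).mul_of_nonneg
      ((Real.summable_pow_div_factorial _).mul_of_nonneg
        (summable_poch_mul_pow_div_factorial hm (by positivity) hxθ)
        (fun l => by positivity) (fun j => by have := poch_pos hm j; positivity))
      (fun n => by positivity) (fun q => by have := poch_pos hm q.2; positivity)
  refine hbound.of_nonneg_of_le (fun q => by have := poch_pos hm q.2.2; positivity) ?_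
  rintro ⟨n, l, j⟩
  have hfac := factorial_add_add_mul_pow_le hv.le hv.le hθ.le n l j
  rw [hsum, one_pow, mul_one] at hfac
  have := poch_pos hm j
  calc y ^ n * z ^ l * (poch m j * x ^ j) * ((n + l + j)! / (n ! ^ 2 * l ! ^ 2 * j ! ^ 2))
      = y ^ n * z ^ l * (poch m j * x ^ j) / (v ^ n * v ^ l * θ ^ j * (n ! ^ 2 * l ! ^ 2 * j ! ^ 2))
        * ((n + l + j)! * (v ^ n * v ^ l * θ ^ j)) := by
        field_simp
    _ ≤ y ^ n * z ^ l * (poch m j * x ^ j) / (v ^ n * v ^ l * θ ^ j * (n ! ^ 2 * l ! ^ 2 * j ! ^ 2))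
        * (n ! * l ! * j !) := by gcongr
    _ = (y / v) ^ n / n ! * ((z / v) ^ l / l ! * (poch m j * (x / θ) ^ j / j !)) := by
        simp only [div_pow]
        field_simp

def orderedTripleEquiv : ℕ × ℕ × ℕ ≃ {p : ℕ × ℕ × ℕ // p.2.2 ≤ p.2.1 ∧ p.2.1 ≤ p.1} where
  toFun q := ⟨(q.1 + q.2.1 + q.2.2, q.1 + q.2.1, q.1), Nat.le_add_right _ _, Nat.le_add_right _ _⟩
  invFun p := (p.1.2.2, p.1.2.1 - p.1.2.2, p.1.1 - p.1.2.1)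
  left_inv q := by simp
  right_inv := by
    rintro ⟨⟨k, i, n⟩, hni, hik⟩
    dsimp only at hni hik
    ext <;> dsimp <;> omega

theorem alpha_mul_pow_mul_pow_eq {σ ρ m K : ℝ} (hσ : σ ≠ 0) (hρ : ρ ≠ 0) (h1ρ : 1 - ρ ≠ 0)
    (r₁ r₂ : ℝ) (n l j : ℕ) :
    alpha σ ρ m K (n + l + j) (n + l) n * r₁ ^ (2 * n + 1) * r₂ ^ (2 * l + 1) =
      4 * Real.rpow (m * ρ / (m * ρ + K)) m * r₁ * r₂ / (σ ^ 4 * (1 - ρ) * (1 + ρ)) *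
        ((r₁ ^ 2 * (ρ / (σ ^ 2 * (1 - ρ) * (1 + ρ)))) ^ n *
          (r₂ ^ 2 * (ρ / (σ ^ 2 * (1 - ρ) * (1 + ρ)))) ^ l *
          (poch m j * (K * (1 - ρ) / ((ρ * m + K) * (1 + ρ))) ^ j) *
          ((n + l + j)! / (n ! ^ 2 * l ! ^ 2 * j ! ^ 2))) := by
  simp only [alpha, Nat.add_sub_cancel_left, div_pow, mul_pow, ← pow_mul]
  field_simp
  ring

theorem pdf_series_summable_general (σ ρ m K r₁ r₂ : ℝ)
    (hσ : 0 < σ) (hρ0 : 0 < ρ) (hρ1 : ρ < 1) (hm : 0 < m) (hK : 0 < K) :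
    Summable (fun p : {p : ℕ × ℕ × ℕ // p.2.2 ≤ p.2.1 ∧ p.2.1 ≤ p.1} =>
      alpha σ ρ m K p.val.1 p.val.2.1 p.val.2.2 *
        r₁ ^ (2 * p.val.2.2 + 1) * r₂ ^ (2 * (p.val.2.1 - p.val.2.2) + 1)) := by
  have h1ρ : 0 < 1 - ρ := sub_pos.2 hρ1
  have hx1 : K * (1 - ρ) / ((ρ * m + K) * (1 + ρ)) < 1 := by
    rw [div_lt_one (by positivity)]
    nlinarith [mul_pos hρ0 hm, mul_pos hρ0 hK]
  have ht : 0 ≤ ρ / (σ ^ 2 * (1 - ρ) * (1 + ρ)) := by positivity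
  have hs := summable_pow_mul_pow_mul_poch_mul_factorial_div hm (by positivity) hx1
    (mul_nonneg (sq_nonneg r₁) ht) (mul_nonneg (sq_nonneg r₂) ht)
  rw [← orderedTripleEquiv.summable_iff]
  apply (hs.mul_left _).congr
  rintro ⟨n, l, j⟩
  simp only [Function.comp_apply, orderedTripleEquiv, Equiv.coe_fn_mk, Nat.add_sub_cancel_left]
  exact (alpha_mul_pow_mul_pow_eq hσ.ne' hρ0.ne' h1ρ.ne' _ _ _ _ _).symm

theorem pdf_series_summable (σ ρ m K r₁ r₂ : ℝ)
    (hσ : 0 < σ) (hρ0 : 0 < ρ) (hρ1 : ρ < 1) (hm : 0 < m) (hK : 0 < K)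
    (hr₁ : 0 ≤ r₁) (hr₂ : 0 ≤ r₂) :
    Summable (fun p : {p : ℕ × ℕ × ℕ // p.2.2 ≤ p.2.1 ∧ p.2.1 ≤ p.1} =>
      alpha σ ρ m K p.val.1 p.val.2.1 p.val.2.2 *
        r₁ ^ (2 * p.val.2.2 + 1) * r₂ ^ (2 * (p.val.2.1 - p.val.2.2) + 1)) :=
  pdf_series_summable_general σ ρ m K r₁ r₂ hσ hρ0 hρ1 hm hK
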